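/- arXiv:1410.0288 — 2 statements merged into one kernel-verified Lean document; each statement's English description precedes it below -/
import Mathlib

section
/- Let Ω ⊆ ℂ be open and let τ, ρ : Ω → ℝ be smooth with ρ > 0 and Δ₀τ + e^{2τ} = 0 on Ω. Then at each point of Ω the identity ρ² + e^{−2τ} ρ Δ₀ρ = 1 + e^{−2τ}(ρ_x² + ρ_y²) holds if and only if the function σ := τ − log ρ satisfies Δ₀σ + e^{2σ} = 0 at that point. In other words, ρ satisfies the Ribaucour equation relative to τ exactly when the conformal metric (1/ρ²)e^{2τ}(dx²+dy²) = e^{2σ}(dx²+dy²) has constant Gaussian curvature 1. -/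
/-!
From `σ = τ - log ρ` one gets `Δ₀σ = Δ₀τ - Δ₀ρ/ρ + |∇ρ|²/ρ²` and `e^{2σ} = e^{2τ}/ρ²`, so the
Liouville equation `Δ₀τ = -e^{2τ}` turns `Δ₀σ + e^{2σ}` into
`(e^{2τ}/ρ²) · (1 + e^{-2τ}|∇ρ|² - ρ² - e^{-2τ} ρ Δ₀ρ)`, a positive multiple of the defect of the
Ribaucour equation.
-/

/-- Partial derivative in the `x`-direction of a function on `ℂ ≅ ℝ²`. -/
noncomputable def pdx (u : ℂ → ℝ) (z : ℂ) : ℝ := fderiv ℝ u z 1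

/-- Partial derivative in the `y`-direction of a function on `ℂ ≅ ℝ²`. -/
noncomputable def pdy (u : ℂ → ℝ) (z : ℂ) : ℝ := fderiv ℝ u z Complex.I

/-- Flat Laplacian `Δ₀u = u_xx + u_yy`. -/
noncomputable def lap (u : ℂ → ℝ) (z : ℂ) : ℝ := pdx (pdx u) z + pdy (pdy u) z

open Filter Topology

noncomputable def pd {E : Type*} [NormedAddCommGroup E] [NormedSpace ℝ E]
    (v : E) (u : E → ℝ) (z : E) : ℝ :=
  fderiv ℝ u z v

section DirectionalDerivative

variable {E : Type*} [NormedAddCommGroup E] [NormedSpace ℝ E] (v : E) {u w : E → ℝ} {z : E}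

theorem Filter.EventuallyEq.pd_eq (h : u =ᶠ[𝓝 z] w) : pd v u z = pd v w z := by
  rw [_root_.pd, h.fderiv_eq, _root_.pd]

theorem Filter.EventuallyEq.pd (h : u =ᶠ[𝓝 z] w) : pd v u =ᶠ[𝓝 z] pd v w :=
  h.eventuallyEq_nhds.mono fun _ hx => hx.pd_eq v

theorem pd_sub (hu : DifferentiableAt ℝ u z) (hw : DifferentiableAt ℝ w z) :
    pd v (fun x => u x - w x) z = pd v u z - pd v w z := by
  simp [pd, fderiv_fun_sub hu hw]

theorem pd_mul (hu : DifferentiableAt ℝ u z) (hw : DifferentiableAt ℝ w z) :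
    pd v (fun x => u x * w x) z = u z * pd v w z + w z * pd v u z := by
  simp [pd, fderiv_fun_mul hu hw]

theorem pd_inv (hu : DifferentiableAt ℝ u z) (h0 : u z ≠ 0) :
    pd v (fun x => (u x)⁻¹) z = -pd v u z / u z ^ 2 := by
  have hinv : HasFDerivAt (fun x => (u x)⁻¹) ((-(u z ^ 2)⁻¹) • fderiv ℝ u z) z :=
    (hasDerivAt_inv h0).comp_hasFDerivAt z hu.hasFDerivAt
  rw [pd, hinv.fderiv, pd]
  simp only [FunLike.coe_smul, Pi.smul_apply, smul_eq_mul]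
  ring

theorem pd_log (hu : DifferentiableAt ℝ u z) (h0 : u z ≠ 0) :
    pd v (fun x => Real.log (u x)) z = (u z)⁻¹ * pd v u z := by
  simp [pd, (hu.hasFDerivAt.log h0).fderiv]

theorem eventually_differentiableAt_of_contDiffAt (hu : ContDiffAt ℝ 2 u z) :
    ∀ᶠ x in 𝓝 z, DifferentiableAt ℝ u x :=
  (hu.eventually (by simp)).mono fun _ hx => hx.differentiableAt (by simp)

theorem differentiableAt_pd (hu : ContDiffAt ℝ 2 u z) : DifferentiableAt ℝ (pd v u) z :=
  ((hu.fderiv_right (m := 1) (by norm_num)).differentiableAt (by simp)).clm_apply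
    (differentiableAt_const v)

theorem pd_pd_sub (hu : ContDiffAt ℝ 2 u z) (hw : ContDiffAt ℝ 2 w z) :
    pd v (pd v fun x => u x - w x) z = pd v (pd v u) z - pd v (pd v w) z := by
  have hsub : pd v (fun x => u x - w x) =ᶠ[𝓝 z] fun x => pd v u x - pd v w x :=
    (eventually_differentiableAt_of_contDiffAt hu).and
      (eventually_differentiableAt_of_contDiffAt hw) |>.mono fun x hx => pd_sub v hx.1 hx.2
  rw [hsub.pd_eq]
  exact pd_sub v (differentiableAt_pd v hu) (differentiableAt_pd v hw)

theorem pd_pd_log (hu : ContDiffAt ℝ 2 u z) (h0 : u z ≠ 0) :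
    pd v (pd v fun x => Real.log (u x)) z
      = (u z)⁻¹ * pd v (pd v u) z - (pd v u z) ^ 2 / u z ^ 2 := by
  have hdiff : DifferentiableAt ℝ u z := hu.differentiableAt (by simp)
  have hlog : pd v (fun x => Real.log (u x)) =ᶠ[𝓝 z] fun x => (u x)⁻¹ * pd v u x :=
    (eventually_differentiableAt_of_contDiffAt hu).and
      (hdiff.continuousAt.eventually_ne h0) |>.mono fun x hx => pd_log v hx.1 hx.2
  rw [hlog.pd_eq, pd_mul (u := fun x => (u x)⁻¹) v (hdiff.inv h0) (differentiableAt_pd v hu),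
    pd_inv v hdiff h0]
  ring

end DirectionalDerivative

section Laplacian

variable {u w : ℂ → ℝ} {z : ℂ}

theorem lap_eq_pd (u : ℂ → ℝ) (z : ℂ) :
    lap u z = pd 1 (pd 1 u) z + pd Complex.I (pd Complex.I u) z :=
  rfl

theorem Filter.EventuallyEq.lap_eq (h : u =ᶠ[𝓝 z] w) : lap u z = lap w z := by
  simp only [lap_eq_pd, (h.pd 1).pd_eq, (h.pd Complex.I).pd_eq]

theorem lap_sub (hu : ContDiffAt ℝ 2 u z) (hw : ContDiffAt ℝ 2 w z) :
    lap (fun x => u x - w x) z = lap u z - lap w z := by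
  simp only [lap_eq_pd, pd_pd_sub _ hu hw]
  ring

theorem lap_log (hu : ContDiffAt ℝ 2 u z) (h0 : u z ≠ 0) :
    lap (fun x => Real.log (u x)) z
      = lap u z / u z - (pdx u z ^ 2 + pdy u z ^ 2) / u z ^ 2 := by
  simp only [lap_eq_pd, pd_pd_log _ hu h0]
  simp only [pdx, pdy, pd]
  ring

end Laplacian

/-- with `τ` satisfying the Liouville equation on an open `Ω ⊆ ℂ` and
`ρ > 0` smooth, at each point of `Ω` the Ribaucour equation
`ρ² + e^{-2τ} ρ Δ₀ρ = 1 + e^{-2τ}(ρ_x² + ρ_y²)` holds iff `σ = τ - log ρ` satisfies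
`Δ₀σ + e^{2σ} = 0` there, i.e. iff the metric `(1/ρ²)e^{2τ}(dx²+dy²)` has curvature `1`. -/
theorem ribaucour_iff_dual_conformal_factor_liouville
    (Ω : Set ℂ) (hΩ : IsOpen Ω) (τ ρ : ℂ → ℝ)
    (hτ : ContDiffOn ℝ (⊤ : ℕ∞) τ Ω) (hρ : ContDiffOn ℝ (⊤ : ℕ∞) ρ Ω)
    (hρpos : ∀ z ∈ Ω, 0 < ρ z)
    (hLiouville : ∀ z ∈ Ω, lap τ z + Real.exp (2 * τ z) = 0)
    (σ : ℂ → ℝ) (hσ : ∀ z ∈ Ω, σ z = τ z - Real.log (ρ z)) :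
    ∀ z ∈ Ω,
      (ρ z ^ 2 + Real.exp (-(2 * τ z)) * ρ z * lap ρ z
          = 1 + Real.exp (-(2 * τ z)) * (pdx ρ z ^ 2 + pdy ρ z ^ 2))
        ↔ lap σ z + Real.exp (2 * σ z) = 0 := by
  intro z hz
  have hτz : ContDiffAt ℝ 2 τ z := (hτ.contDiffAt (hΩ.mem_nhds hz)).of_le (by norm_cast)
  have hρz : ContDiffAt ℝ 2 ρ z := (hρ.contDiffAt (hΩ.mem_nhds hz)).of_le (by norm_cast)
  have hρ0 : ρ z ≠ 0 := (hρpos z hz).ne'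
  have hσ_germ : σ =ᶠ[𝓝 z] fun x => τ x - Real.log (ρ x) :=
    eventually_of_mem (hΩ.mem_nhds hz) hσ
  have hlapσ : lap σ z = -Real.exp (2 * τ z) - lap ρ z / ρ z
      + (pdx ρ z ^ 2 + pdy ρ z ^ 2) / ρ z ^ 2 := by
    rw [hσ_germ.lap_eq, lap_sub hτz (hρz.log hρ0), lap_log hρz hρ0]
    linarith [hLiouville z hz]
  have hexpσ : Real.exp (2 * σ z) = Real.exp (2 * τ z) / ρ z ^ 2 := by
    rw [hσ z hz, mul_sub, Real.exp_sub, two_mul (Real.log _), Real.exp_add,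
      Real.exp_log (hρpos z hz), sq]
  rw [hlapσ, hexpσ, Real.exp_neg]
  have hE : Real.exp (2 * τ z) ≠ 0 := (Real.exp_pos _).ne'
  field_simp
  constructor <;> intro h <;> linarith
end

section
/- Let Ω ⊆ ℂ be open and let τ, ρ : Ω → ℝ be smooth with ρ > 0, satisfying the Ribaucour equation ρ² + e^{−2τ} ρ Δ₀ρ = 1 + e^{−2τ}(ρ_x² + ρ_y²) on Ω. Set ρ* := 1/ρ, τ* := τ − log ρ, and define m := −(1/2)(e^{−2τ}Δ₀ρ + 2ρ), q := 2 e^{−2τ} Re(ρ_{zz} − 2τ_zρ_z), and analogously m* := −(1/2)(e^{−2τ*}Δ₀ρ* + 2ρ*), q* := 2 e^{−2τ*} Re((ρ*)_{zz} − 2(τ*)_z(ρ*)_z), and likewise q_im := 2e^{−2τ} Im(ρ_{zz} − 2τ_zρ_z), q*_im := 2e^{−2τ*} Im((ρ*)_{zz} − 2(τ*)_z(ρ*)_z). Then m* = m, q* = −q and q*_im = −q_im on Ω; consequently m* + q* = m − q and m* − q* = m + q. (Here m is the mean radius of curvature H/K and m ± q are the principal curvature radii 1/k₁, 1/k₂ along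 the coordinate directions where these are curvature lines; hence under duality the principal curvatures are switched: k₁ = k₂*, k₂ = k₁*.) -/
/-- Wirtinger derivative `u_z = (u_x - i u_y)/2` of a complex-valued function on `ℂ`. -/
noncomputable def wdz (u : ℂ → ℂ) (z : ℂ) : ℂ :=
  (fderiv ℝ u z 1 - Complex.I * fderiv ℝ u z Complex.I) / 2

/-- The complexification of a real-valued function on `ℂ`. -/
noncomputable def cof (u : ℂ → ℝ) : ℂ → ℂ := fun z => (u z : ℂ)

open Complex Filter Topology

lemma hasDerivAt_neg_inv_sq {t : ℝ} (ht : t ≠ 0) :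
    HasDerivAt (fun s : ℝ => -(s ^ 2)⁻¹) (2 / t ^ 3) t :=
  ((hasDerivAt_pow 2 t).inv (pow_ne_zero 2 ht)).neg.congr_deriv (by field_simp; ring)

section Directional

variable {E : Type*} [NormedAddCommGroup E] [NormedSpace ℝ E] {f : E → ℝ} {x : E}

lemma ContDiffAt.eventually_differentiableAt (hf : ContDiffAt ℝ 2 f x) :
    ∀ᶠ y in 𝓝 x, DifferentiableAt ℝ f y :=
  (hf.eventually (by simp)).mono fun _ hy => hy.differentiableAt (by norm_num)

lemma ContDiffAt.differentiableAt_fderiv_apply (hf : ContDiffAt ℝ 2 f x) (v : E) :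
    DifferentiableAt ℝ (fun y => fderiv ℝ f y v) x :=
  ((hf.fderiv_right (m := 1) (by norm_num)).differentiableAt (by norm_num)).clm_apply
    (differentiableAt_const v)

lemma fderiv_comp_apply {φ : ℝ → ℝ} {φ' : ℝ} (hφ : HasDerivAt φ φ' (f x))
    (hf : DifferentiableAt ℝ f x) (v : E) :
    fderiv ℝ (fun y => φ (f y)) x v = φ' * fderiv ℝ f x v := by
  have h : HasFDerivAt (fun y => φ (f y)) _ x := hφ.comp_hasFDerivAt x hf.hasFDerivAt
  rw [h.fderiv]
  rfl

lemma fderiv_inv_apply (hf : DifferentiableAt ℝ f x) (h0 : f x ≠ 0) (v : E) :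
    fderiv ℝ (fun y => (f y)⁻¹) x v = -(f x ^ 2)⁻¹ * fderiv ℝ f x v :=
  fderiv_comp_apply (hasDerivAt_inv h0) hf v

lemma fderiv_fderiv_inv_apply (hf : ContDiffAt ℝ 2 f x) (h0 : f x ≠ 0) (v v' : E) :
    fderiv ℝ (fun y => fderiv ℝ (fun w => (f w)⁻¹) y v) x v' =
      -fderiv ℝ (fun y => fderiv ℝ f y v) x v' / f x ^ 2
        + 2 * fderiv ℝ f x v * fderiv ℝ f x v' / f x ^ 3 := by
  have hf' := hf.differentiableAt (by norm_num)
  have hev : (fun y => fderiv ℝ (fun w => (f w)⁻¹) y v)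
      =ᶠ[𝓝 x] fun y => -(f y ^ 2)⁻¹ * fderiv ℝ f y v := by
    filter_upwards [hf.eventually_differentiableAt, hf.continuousAt.eventually_ne h0]
      with y hy hy0 using fderiv_inv_apply hy hy0 v
  have hφ := hasDerivAt_neg_inv_sq h0
  have hc : DifferentiableAt ℝ (fun y => -(f y ^ 2)⁻¹) x :=
    (hφ.comp_hasFDerivAt x hf'.hasFDerivAt).differentiableAt
  rw [hev.fderiv_eq, fderiv_fun_mul hc (hf.differentiableAt_fderiv_apply v)]
  simp only [add_apply, smul_apply, smul_eq_mul, fderiv_comp_apply hφ hf']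
  field_simp

end Directional

section Laplacian

variable {f g : ℂ → ℝ} {z : ℂ}

lemma lap_congr (h : f =ᶠ[𝓝 z] g) : lap f z = lap g z := by
  have hx : pdx f =ᶠ[𝓝 z] pdx g := h.fderiv.mono fun w hw => by rw [pdx, pdx, hw]
  have hy : pdy f =ᶠ[𝓝 z] pdy g := h.fderiv.mono fun w hw => by rw [pdy, pdy, hw]
  change fderiv ℝ (pdx f) z 1 + fderiv ℝ (pdy f) z I = fderiv ℝ (pdx g) z 1 + fderiv ℝ (pdy g) z I
  rw [hx.fderiv_eq, hy.fderiv_eq]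

lemma lap_inv (hf : ContDiffAt ℝ 2 f z) (h0 : f z ≠ 0) :
    lap (fun w => (f w)⁻¹) z = -lap f z / f z ^ 2 + 2 * (pdx f z ^ 2 + pdy f z ^ 2) / f z ^ 3 := by
  change fderiv ℝ (fun y => fderiv ℝ (fun w => (f w)⁻¹) y 1) z 1
      + fderiv ℝ (fun y => fderiv ℝ (fun w => (f w)⁻¹) y I) z I = _
  rw [fderiv_fderiv_inv_apply hf h0, fderiv_fderiv_inv_apply hf h0]
  unfold lap pdx pdy
  ring

end Laplacian

section Wirtinger

variable {f g : ℂ → ℂ} {u v : ℂ → ℝ} {z : ℂ}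

lemma wdz_congr (h : f =ᶠ[𝓝 z] g) : wdz f z = wdz g z := by
  rw [wdz, wdz, h.fderiv_eq]

lemma wdz_sub (hf : DifferentiableAt ℝ f z) (hg : DifferentiableAt ℝ g z) :
    wdz (fun w => f w - g w) z = wdz f z - wdz g z := by
  simp only [wdz, fderiv_fun_sub hf hg, sub_apply]
  ring

lemma wdz_mul (hf : DifferentiableAt ℝ f z) (hg : DifferentiableAt ℝ g z) :
    wdz (fun w => f w * g w) z = wdz f z * g z + f z * wdz g z := by
  simp only [wdz, fderiv_fun_mul hf hg, add_apply, smul_apply, smul_eq_mul]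
  ring

lemma hasFDerivAt_cof (hu : DifferentiableAt ℝ u z) :
    HasFDerivAt (cof u) (ofRealCLM.comp (fderiv ℝ u z)) z :=
  ofRealCLM.hasFDerivAt.comp z hu.hasFDerivAt

lemma Filter.EventuallyEq.wdz_cof (h : u =ᶠ[𝓝 z] v) : wdz (cof u) =ᶠ[𝓝 z] wdz (cof v) :=
  h.eventuallyEq_nhds.mono fun _ hw => wdz_congr (hw.fun_comp ofReal)

lemma wdz_cof (hu : DifferentiableAt ℝ u z) : wdz (cof u) z = (pdx u z - I * pdy u z) / 2 := by
  simp [wdz, (hasFDerivAt_cof hu).fderiv, pdx, pdy]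

lemma wdz_cof_sub (hu : DifferentiableAt ℝ u z) (hv : DifferentiableAt ℝ v z) :
    wdz (cof fun w => u w - v w) z = wdz (cof u) z - wdz (cof v) z := by
  have h : cof (fun w => u w - v w) = fun w => cof u w - cof v w :=
    funext fun w => ofReal_sub (u w) (v w)
  rw [h, wdz_sub (hasFDerivAt_cof hu).differentiableAt (hasFDerivAt_cof hv).differentiableAt]

lemma wdz_cof_comp {φ : ℝ → ℝ} {φ' : ℝ} (hφ : HasDerivAt φ φ' (u z))
    (hu : DifferentiableAt ℝ u z) : wdz (cof fun w => φ (u w)) z = φ' * wdz (cof u) z := by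
  rw [wdz_cof (u := fun w => φ (u w)) (hφ.differentiableAt.comp z hu), wdz_cof hu]
  simp only [pdx, pdy, fderiv_comp_apply hφ hu]
  push_cast
  ring

lemma differentiableAt_wdz_cof (hu : ContDiffAt ℝ 2 u z) : DifferentiableAt ℝ (wdz (cof u)) z := by
  have hev : wdz (cof u) =ᶠ[𝓝 z] fun w => ((pdx u w : ℂ) - I * pdy u w) / 2 :=
    hu.eventually_differentiableAt.mono fun _ hw => wdz_cof hw
  have hx := ofRealCLM.differentiableAt.comp z (hu.differentiableAt_fderiv_apply 1)
  have hy := ofRealCLM.differentiableAt.comp z (hu.differentiableAt_fderiv_apply I)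
  exact ((hx.sub (hy.const_mul I)).mul_const (2⁻¹ : ℂ)).congr_of_eventuallyEq hev

lemma wdz_wdz_cof_inv (hu : ContDiffAt ℝ 2 u z) (h0 : u z ≠ 0) :
    wdz (wdz (cof fun w => (u w)⁻¹)) z
      = -wdz (wdz (cof u)) z / u z ^ 2 + 2 * wdz (cof u) z ^ 2 / u z ^ 3 := by
  have hu' := hu.differentiableAt (by norm_num)
  have hev : wdz (cof fun w => (u w)⁻¹) =ᶠ[𝓝 z]
      fun w => cof (fun w => -(u w ^ 2)⁻¹) w * wdz (cof u) w := by
    filter_upwards [hu.eventually_differentiableAt, hu.continuousAt.eventually_ne h0]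
      with w hw hw0
    rw [wdz_cof_comp (hasDerivAt_inv hw0) hw]
    simp [cof]
  have hc : DifferentiableAt ℝ (cof fun w => -(u w ^ 2)⁻¹) z :=
    (hasFDerivAt_cof (u := fun w => -(u w ^ 2)⁻¹)
      ((hasDerivAt_neg_inv_sq h0).differentiableAt.comp z hu')).differentiableAt
  rw [wdz_congr hev, wdz_mul hc (differentiableAt_wdz_cof hu),
    wdz_cof_comp (hasDerivAt_neg_inv_sq h0) hu']
  simp only [cof]
  push_cast
  field_simp
  ring

end Wirtinger

/-- `ρ_zz - 2τ_zρ_z`, which encodes the traceless part of the second fundamental form. -/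
noncomputable def tracelessPart (τ ρ : ℂ → ℝ) (z : ℂ) : ℂ :=
  wdz (wdz (cof ρ)) z - 2 * wdz (cof τ) z * wdz (cof ρ) z

lemma Real.exp_neg_two_mul_sub_log {t r : ℝ} (hr : 0 < r) :
    Real.exp (-(2 * (t - Real.log r))) = Real.exp (-(2 * t)) * r ^ 2 := by
  rw [show -(2 * (t - Real.log r)) = -(2 * t) + (Real.log r + Real.log r) by ring,
    Real.exp_add, Real.exp_add, Real.exp_log hr]
  ring

section Dual

variable {τ ρ τs ρs : ℂ → ℝ} {z : ℂ}

lemma exp_mul_lap_add_two_mul_dual (hρ : ContDiffAt ℝ 2 ρ z) (hρ0 : 0 < ρ z)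
    (hρs : ρs =ᶠ[𝓝 z] fun w => (ρ w)⁻¹) (hτs : τs z = τ z - Real.log (ρ z))
    (hRibaucour : ρ z ^ 2 + Real.exp (-(2 * τ z)) * ρ z * lap ρ z
      = 1 + Real.exp (-(2 * τ z)) * (pdx ρ z ^ 2 + pdy ρ z ^ 2)) :
    Real.exp (-(2 * τs z)) * lap ρs z + 2 * ρs z
      = Real.exp (-(2 * τ z)) * lap ρ z + 2 * ρ z := by
  rw [hτs, Real.exp_neg_two_mul_sub_log hρ0, lap_congr hρs, lap_inv hρ hρ0.ne', hρs.eq_of_nhds]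
  field_simp
  linear_combination -2 * hRibaucour

lemma tracelessPart_dual (hρ : ContDiffAt ℝ 2 ρ z) (hτ : DifferentiableAt ℝ τ z) (hρ0 : 0 < ρ z)
    (hρs : ρs =ᶠ[𝓝 z] fun w => (ρ w)⁻¹) (hτs : τs =ᶠ[𝓝 z] fun w => τ w - Real.log (ρ w)) :
    tracelessPart τs ρs z = -tracelessPart τ ρ z / ρ z ^ 2 := by
  have hρ' := hρ.differentiableAt (by norm_num)
  have hρ0' := hρ0.ne'
  have hρ0ℂ : (ρ z : ℂ) ≠ 0 := ofReal_ne_zero.mpr hρ0'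
  rw [tracelessPart, tracelessPart, wdz_congr hρs.wdz_cof, wdz_wdz_cof_inv hρ hρ0',
    hρs.wdz_cof.eq_of_nhds, wdz_cof_comp (φ := Inv.inv) (hasDerivAt_inv hρ0') hρ',
    hτs.wdz_cof.eq_of_nhds, wdz_cof_sub hτ (hρ'.log hρ0'),
    wdz_cof_comp (φ := Real.log) (Real.hasDerivAt_log hρ0') hρ']
  push_cast
  field_simp
  ring

lemma exp_mul_tracelessPart_dual (hρ : ContDiffAt ℝ 2 ρ z) (hτ : DifferentiableAt ℝ τ z)
    (hρ0 : 0 < ρ z) (hρs : ρs =ᶠ[𝓝 z] fun w => (ρ w)⁻¹)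
    (hτs : τs =ᶠ[𝓝 z] fun w => τ w - Real.log (ρ w)) :
    (Real.exp (-(2 * τs z)) : ℂ) * tracelessPart τs ρs z
      = -(Real.exp (-(2 * τ z)) * tracelessPart τ ρ z) := by
  have hρ0ℂ : (ρ z : ℂ) ≠ 0 := ofReal_ne_zero.mpr hρ0.ne'
  rw [tracelessPart_dual hρ hτ hρ0 hρs hτs, hτs.eq_of_nhds, Real.exp_neg_two_mul_sub_log hρ0]
  push_cast
  field_simp

end Dual

/-- for `ρ > 0` satisfying the Ribaucour equation relative to `τ` on the
open set `Ω`, with dual data `ρ* = 1/ρ`, `τ* = τ - log ρ`, the quantities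
`m = -(1/2)(e^{-2τ}Δ₀ρ + 2ρ)`, `q = 2 e^{-2τ} Re(ρ_{zz} - 2τ_zρ_z)`,
`q_im = 2 e^{-2τ} Im(ρ_{zz} - 2τ_zρ_z)` and their dual analogues satisfy `m* = m`,
`q* = -q`, `q*_im = -q_im`, hence `m* + q* = m - q` and `m* - q* = m + q`: under duality
the principal curvatures are switched. -/
theorem dual_ribaucour_switches_principal_curvatures
    (Ω : Set ℂ) (hΩ : IsOpen Ω) (τ ρ : ℂ → ℝ)
    (hτ : ContDiffOn ℝ (⊤ : ℕ∞) τ Ω) (hρ : ContDiffOn ℝ (⊤ : ℕ∞) ρ Ω)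
    (hρpos : ∀ z ∈ Ω, 0 < ρ z)
    (hRibaucour : ∀ z ∈ Ω, ρ z ^ 2 + Real.exp (-(2 * τ z)) * ρ z * lap ρ z
      = 1 + Real.exp (-(2 * τ z)) * (pdx ρ z ^ 2 + pdy ρ z ^ 2))
    (ρs τs : ℂ → ℝ)
    (hρs : ∀ z ∈ Ω, ρs z = 1 / ρ z)
    (hτs : ∀ z ∈ Ω, τs z = τ z - Real.log (ρ z))
    (m q qim ms qs qsim : ℂ → ℝ)
    (hm : ∀ z ∈ Ω, m z = -(1 / 2) * (Real.exp (-(2 * τ z)) * lap ρ z + 2 * ρ z))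
    (hq : ∀ z ∈ Ω, q z = 2 * Real.exp (-(2 * τ z)) *
      (wdz (wdz (cof ρ)) z - 2 * wdz (cof τ) z * wdz (cof ρ) z).re)
    (hqim : ∀ z ∈ Ω, qim z = 2 * Real.exp (-(2 * τ z)) *
      (wdz (wdz (cof ρ)) z - 2 * wdz (cof τ) z * wdz (cof ρ) z).im)
    (hms : ∀ z ∈ Ω, ms z = -(1 / 2) * (Real.exp (-(2 * τs z)) * lap ρs z + 2 * ρs z))
    (hqs : ∀ z ∈ Ω, qs z = 2 * Real.exp (-(2 * τs z)) *
      (wdz (wdz (cof ρs)) z - 2 * wdz (cof τs) z * wdz (cof ρs) z).re)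
    (hqsim : ∀ z ∈ Ω, qsim z = 2 * Real.exp (-(2 * τs z)) *
      (wdz (wdz (cof ρs)) z - 2 * wdz (cof τs) z * wdz (cof ρs) z).im) :
    ∀ z ∈ Ω, ms z = m z ∧ qs z = -q z ∧ qsim z = -qim z ∧
      ms z + qs z = m z - q z ∧ ms z - qs z = m z + q z := by
  intro z hz
  have hΩz := hΩ.mem_nhds hz
  have hρz : ContDiffAt ℝ 2 ρ z := (hρ.contDiffAt hΩz).of_le (by norm_cast)
  have hτz : DifferentiableAt ℝ τ z := (hτ.contDiffAt hΩz).differentiableAt (by simp)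
  have hρs' : ρs =ᶠ[𝓝 z] fun w => (ρ w)⁻¹ :=
    eventually_of_mem hΩz fun w hw => (hρs w hw).trans (one_div _)
  have hτs' : τs =ᶠ[𝓝 z] fun w => τ w - Real.log (ρ w) := eventually_of_mem hΩz hτs
  have hmean : ms z = m z := by
    rw [hms z hz, hm z hz,
      exp_mul_lap_add_two_mul_dual hρz (hρpos z hz) hρs' (hτs z hz) (hRibaucour z hz)]
  have htrace := exp_mul_tracelessPart_dual hρz hτz (hρpos z hz) hρs' hτs'
  have hre := congrArg re htrace
  have him := congrArg im htrace
  rw [re_ofReal_mul, neg_re, re_ofReal_mul] at hre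
  rw [im_ofReal_mul, neg_im, im_ofReal_mul] at him
  unfold tracelessPart at hre him
  have hqs' : qs z = -q z := by
    rw [hqs z hz, hq z hz]
    linear_combination 2 * hre
  have hqsim' : qsim z = -qim z := by
    rw [hqsim z hz, hqim z hz]
    linear_combination 2 * him
  exact ⟨hmean, hqs', hqsim', by linarith, by linarith⟩
end
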